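/- For every n ≥ 3, the proper conflict-free chromatic number of the complete subdivision SK_n of the complete graph K_n equals n. -/

import Mathlib

open SimpleGraph

/-- A proper conflict-free coloring: proper, and every non-isolated vertex has a color
appearing exactly once in its open neighborhood. -/
def IsPCFColoring {V : Type*} (G : SimpleGraph V) {n : ℕ} (c : V → Fin n) : Prop :=
  (∀ u v, G.Adj u v → c u ≠ c v) ∧
  ∀ v : V, (G.neighborSet v).Nonempty →
    ∃ k : Fin n, ∃! u, u ∈ G.neighborSet v ∧ c u = k

/-- The PCF chromatic number. -/
noncomputable def pcfChromNum {V : Type*} (G : SimpleGraph V) : ℕ :=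
  sInf {n | ∃ c : V → Fin n, IsPCFColoring G c}

/-- The chromatic number (as a natural number). -/
noncomputable def chromNum {V : Type*} (G : SimpleGraph V) : ℕ :=
  sInf {n | G.Colorable n}
/-- The complete subdivision of a graph: every edge subdivided exactly once. -/
def subdiv {V : Type*} (G : SimpleGraph V) : SimpleGraph (V ⊕ G.edgeSet) :=
  SimpleGraph.fromRel (fun a b => match a, b with
    | Sum.inl v, Sum.inr e => v ∈ (e : Sym2 V)
    | _, _ => False)

/-! In a PCF colouring of `SK_n` a subdivision vertex `u_ij` has only the two neighbours `v_i, v_j`,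
so their colours must differ: the branch vertices alone need `n` colours. Conversely, with colours
`0, …, n-1`, colour `v_i` by `i` and `u_ij` by the first of `0, 1, 2` outside `{i, j}`. Around `v_0`
the colour `2` occurs only on `u_01`; around any other `v_i` every `u_ij` with `j ≠ 0` has colour
`0`, so the colour of `u_i0` is unique. -/

section Subdivision

variable {V : Type*} {G : SimpleGraph V}

lemma mem_subdiv_neighborSet_inl {v : V} {x : V ⊕ G.edgeSet} :
    x ∈ (subdiv G).neighborSet (.inl v) ↔ ∃ w, ∃ h : G.Adj v w, x = .inr ⟨s(v, w), h⟩ := by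
  rcases x with w | ⟨e, he⟩
  · simp [subdiv]
  · simp only [subdiv, mem_neighborSet, fromRel_adj, ne_eq, reduceCtorEq, not_false_eq_true,
      or_false, true_and, Sum.inr.injEq, Subtype.ext_iff]
    constructor
    · intro hv
      obtain ⟨w, rfl⟩ := Sym2.mem_iff_exists.1 hv
      exact ⟨w, he, rfl⟩
    · rintro ⟨w, -, rfl⟩
      exact Sym2.mem_mk_left v w

lemma mem_subdiv_neighborSet_inr {e : G.edgeSet} {x : V ⊕ G.edgeSet} :
    x ∈ (subdiv G).neighborSet (.inr e) ↔ ∃ v ∈ (e : Sym2 V), x = .inl v := by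
  rcases x with v | f <;> simp [subdiv]

lemma IsPCFColoring.subdiv_ne_of_adj {k : ℕ} {col : V ⊕ G.edgeSet → Fin k}
    (hcol : IsPCFColoring (subdiv G) col) {v w : V} (h : G.Adj v w) :
    col (.inl v) ≠ col (.inl w) := by
  intro hvw
  have hv : .inl v ∈ (subdiv G).neighborSet (.inr ⟨s(v, w), h⟩) :=
    mem_subdiv_neighborSet_inr.2 ⟨v, Sym2.mem_mk_left v w, rfl⟩
  have hw : .inl w ∈ (subdiv G).neighborSet (.inr ⟨s(v, w), h⟩) :=
    mem_subdiv_neighborSet_inr.2 ⟨w, Sym2.mem_mk_right v w, rfl⟩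
  obtain ⟨k, x, ⟨hx, hxk⟩, huniq⟩ := hcol.2 _ ⟨_, hv⟩
  obtain ⟨y, hy, rfl⟩ := mem_subdiv_neighborSet_inr.1 hx
  have hvk : col (.inl v) = k := by
    rcases Sym2.mem_iff.1 hy with rfl | rfl
    exacts [hxk, hvw ▸ hxk]
  exact G.ne_of_adj h <| Sum.inl_injective <|
    (huniq _ ⟨hv, hvk⟩).trans (huniq _ ⟨hw, hvw ▸ hvk⟩).symm

lemma isPCFColoring_subdiv {k : ℕ} (c : V → Fin k) (d : Sym2 V → Fin k)
    (hc : ∀ v w, G.Adj v w → c v ≠ c w)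
    (hd : ∀ v w, G.Adj v w → d s(v, w) ≠ c v)
    (hunique : ∀ v w, G.Adj v w →
      ∃ w₀, G.Adj v w₀ ∧ ∀ w, G.Adj v w → d s(v, w) = d s(v, w₀) → w = w₀) :
    IsPCFColoring (subdiv G) (Sum.elim c fun e => d e) := by
  have proper_inl : ∀ v x, (subdiv G).Adj (.inl v) x →
      Sum.elim c (fun e : G.edgeSet => d e) (.inl v) ≠ Sum.elim c (fun e : G.edgeSet => d e) x := by
    intro v x hx
    obtain ⟨w, h, rfl⟩ := mem_subdiv_neighborSet_inl.1 hx
    exact (hd v w h).symm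
  refine ⟨?_, ?_⟩
  · rintro (v | e) x hx
    · exact proper_inl v x hx
    · obtain ⟨v, -, rfl⟩ := mem_subdiv_neighborSet_inr.1 hx
      exact (proper_inl v _ hx.symm).symm
  · rintro (v | ⟨e, he⟩) ⟨x, hx⟩
    · obtain ⟨w, h, rfl⟩ := mem_subdiv_neighborSet_inl.1 hx
      obtain ⟨w₀, h₀, hw₀⟩ := hunique v w h
      refine ⟨d s(v, w₀), .inr ⟨s(v, w₀), h₀⟩, ⟨mem_subdiv_neighborSet_inl.2 ⟨w₀, h₀, rfl⟩, rfl⟩, ?_⟩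
      rintro y ⟨hy, hyc⟩
      obtain ⟨w', h', rfl⟩ := mem_subdiv_neighborSet_inl.1 hy
      obtain rfl := hw₀ w' h' hyc
      rfl
    · induction e using Sym2.ind with
      | _ v w =>
      refine ⟨c v, .inl v, ⟨mem_subdiv_neighborSet_inr.2 ⟨v, Sym2.mem_mk_left v w, rfl⟩, rfl⟩, ?_⟩
      rintro y ⟨hy, hyc⟩
      obtain ⟨u, hu, rfl⟩ := mem_subdiv_neighborSet_inr.1 hy
      rcases Sym2.mem_iff.1 hu with rfl | rfl
      · rfl
      · exact (hc _ _ he hyc.symm).elim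

end Subdivision

section FirstNotMem

variable {α : Type*} [DecidableEq α]

def firstNotMem (a b c : α) (e : Sym2 α) : α :=
  if a ∉ e then a else if b ∉ e then b else c

variable {a b c : α}

lemma firstNotMem_not_mem (hab : a ≠ b) (hac : a ≠ c) (hbc : b ≠ c) (v w : α) :
    firstNotMem a b c s(v, w) ∉ s(v, w) := by
  grind [firstNotMem]

lemma eq_partner_of_firstNotMem_eq (hab : a ≠ b) (hac : a ≠ c) (hbc : b ≠ c) (v w : α)
    (h : firstNotMem a b c s(v, w) = firstNotMem a b c s(v, if v = a then b else a)) :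
    w = if v = a then b else a := by
  grind [firstNotMem]

end FirstNotMem

lemma isPCFColoring_subdiv_top_firstNotMem {n : ℕ} {a b c : Fin n}
    (hab : a ≠ b) (hac : a ≠ c) (hbc : b ≠ c) :
    IsPCFColoring (subdiv (⊤ : SimpleGraph (Fin n)))
      (Sum.elim id fun e => firstNotMem a b c e) := by
  refine isPCFColoring_subdiv id _ (fun v w h => h) (fun v w _ h => ?_) (fun v _ _ => ?_)
  · exact firstNotMem_not_mem hab hac hbc v w (h ▸ Sym2.mem_mk_left v w)
  · refine ⟨if v = a then b else a, ?_, fun w _ => eq_partner_of_firstNotMem_eq hab hac hbc v w⟩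
    split_ifs with hv
    exacts [hv ▸ hab, hv]

lemma IsPCFColoring.card_le_of_subdiv_top {V : Type*} [Fintype V] {k : ℕ}
    {col : V ⊕ (⊤ : SimpleGraph V).edgeSet → Fin k}
    (hcol : IsPCFColoring (subdiv ⊤) col) : Fintype.card V ≤ k := by
  simpa using Fintype.card_le_of_injective _
    fun v w h => by_contra fun hvw => hcol.subdiv_ne_of_adj hvw h

theorem pcf_subdiv_complete (n : ℕ) (hn : 3 ≤ n) :
    pcfChromNum (subdiv (⊤ : SimpleGraph (Fin n))) = n := by
  have hcol := isPCFColoring_subdiv_top_firstNotMem (n := n)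
    (a := ⟨0, by omega⟩) (b := ⟨1, by omega⟩) (c := ⟨2, by omega⟩) (by simp) (by simp) (by simp)
  unfold pcfChromNum
  refine le_antisymm (Nat.sInf_le ⟨_, hcol⟩) (le_csInf ⟨n, _, hcol⟩ ?_)
  rintro k ⟨col, hcol⟩
  simpa using hcol.card_le_of_subdiv_top
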